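/- arXiv:1602.01910 — 2 statements merged into one kernel-verified Lean document; each statement's English description precedes it below -/
import Mathlib

section
/- Let n ≥ 1, a : Fin n → ℝ, d : Fin n → ℝ with d i > 0 for all i, σ > 0, b > 0, and let τ ∈ ℝ. Define x* : Fin n → ℝ by x* i = max(0, min(b, −(a i + σ·τ)/(σ · d i))), and suppose τ is a root of F, i.e., τ = Σ_i x* i. Then x* satisfies the first-order KKT condition in projection form for minimizing f(x) = Σ_i a_i x_i + (σ/2) Σ_i d_i x_i² + (σ/2)(Σ_i x_i)² over the box [0,b]ⁿ: for every i, x* i = max(0, min(b, x* i − (a i + σ · d i · x* i + σ · (Σ_j x* j)))). -/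
/-!
The gradient of `f` at `x*` is `σ dᵢ (x*ᵢ - cᵢ)`, where `cᵢ = -(aᵢ + στ)/(σ dᵢ)` is the unclamped
coordinate and `τ = Σ x*ⱼ`. So the projected-gradient step moves `x*ᵢ = clamp cᵢ` further towards
`cᵢ`, and clamping again returns `x*ᵢ`: a clamped value is a fixed point of any step of
nonnegative length towards the point it clamps.
-/

theorem max_min_add_mul_sub_max_min {α : Type*} [Ring α] [LinearOrder α] [IsOrderedRing α]
    {lo hi κ : α} (hκ : 0 ≤ κ) (c : α) :
    max lo (min hi (max lo (min hi c) + κ * (c - max lo (min hi c)))) = max lo (min hi c) := by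
  rcases lt_or_ge c lo with hlo | hlo
  · have hx : max lo (min hi c) = lo := max_eq_left ((min_le_right _ _).trans hlo.le)
    rw [hx]
    exact max_eq_left ((min_le_right _ _).trans
      (add_le_of_nonpos_right (mul_nonpos_of_nonneg_of_nonpos hκ (sub_nonpos.2 hlo.le))))
  rcases le_or_gt c hi with hhi | hhi
  · rw [min_eq_right hhi, max_eq_right hlo, sub_self, mul_zero, add_zero, min_eq_right hhi,
      max_eq_right hlo]
  · have hcx : max lo hi ≤ c := max_le hlo hhi.le
    rw [min_eq_left hhi.le, min_eq_left (le_max_right lo hi |>.trans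
      (le_add_of_nonneg_right (mul_nonneg hκ (sub_nonneg.2 hcx))))]

theorem root_gives_projection_KKT_general
    (n : ℕ) (a d : Fin n → ℝ) (hd : ∀ i, 0 < d i)
    (σ b τ : ℝ) (hσ : 0 < σ)
    (xs : Fin n → ℝ)
    (hxs : ∀ i, xs i = max 0 (min b (-(a i + σ * τ) / (σ * d i))))
    (hτ : τ = ∑ i, xs i) :
    ∀ i, xs i = max 0 (min b (xs i - (a i + σ * d i * xs i + σ * ∑ j, xs j))) := by
  intro i
  have hκ : 0 < σ * d i := mul_pos hσ (hd i)
  have hstep : xs i - (a i + σ * d i * xs i + σ * ∑ j, xs j)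
      = xs i + σ * d i * (-(a i + σ * τ) / (σ * d i) - xs i) := by
    rw [← hτ, mul_sub, mul_div_cancel₀ _ hκ.ne']
    ring
  rw [hstep, hxs i]
  exact (max_min_add_mul_sub_max_min hκ.le _).symm

/-- Lemma of Section 4.2: if `x*_i = max 0 (min b (-(a_i + στ)/(σ d_i)))` and
`τ = Σ_i x*_i` (i.e. `τ` is a root of `F`), then `x*` satisfies the first-order KKT
condition in projection form for minimizing
`f(x) = Σ a_i x_i + (σ/2) Σ d_i x_i² + (σ/2)(Σ x_i)²` over the box `[0,b]ⁿ`. -/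
theorem root_gives_projection_KKT
    (n : ℕ) (hn : 1 ≤ n) (a d : Fin n → ℝ) (hd : ∀ i, 0 < d i)
    (σ b τ : ℝ) (hσ : 0 < σ) (hb : 0 < b)
    (xs : Fin n → ℝ)
    (hxs : ∀ i, xs i = max 0 (min b (-(a i + σ * τ) / (σ * d i))))
    (hτ : τ = ∑ i, xs i) :
    ∀ i, xs i = max 0 (min b (xs i - (a i + σ * d i * xs i + σ * ∑ j, xs j))) :=
  root_gives_projection_KKT_general n a d hd σ b τ hσ xs hxs hτ
end

section
/- Let n ≥ 1, a : Fin n → ℝ, d : Fin n → ℝ with d i > 0 for all i, σ > 0, b > 0, and let τ ∈ ℝ. Define x* : Fin n → ℝ by x* i = max(0, min(b, −(a i + σ·τ)/(σ · d i))), and suppose τ = Σ_i x* i. Then x* is a global minimizer of f(x) = Σ_i a_i x_i + (σ/2) Σ_i d_i x_i² + (σ/2)(Σ_i x_i)² over the box B = {x | 0 ≤ x i ≤ b for all i}: f(x*) ≤ f(y) for all y ∈ B. -/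
/-!
The objective is a convex quadratic, so a point of the box is a global minimizer as soon as the
gradient makes a nonnegative inner product with every feasible direction. Since `τ = Σ xs`,
the gradient at `xs` is `σ dᵢ (xsᵢ - cᵢ)` with `cᵢ = -(aᵢ + στ)/(σ dᵢ)`, and `xsᵢ` is the
clamp of `cᵢ` to `[0, b]`; the variational inequality of the projection onto an interval gives
`(xsᵢ - cᵢ)(yᵢ - xsᵢ) ≥ 0` coordinatewise.
-/

open Finset

theorem clamp_sub_mul_sub_nonneg {α : Type*} [Ring α] [LinearOrder α] [IsOrderedRing α]
    {lo hi y : α} (c : α) (hy : lo ≤ y ∧ y ≤ hi) :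
    0 ≤ (max lo (min hi c) - c) * (y - max lo (min hi c)) := by
  rcases le_total c lo with hc | hlo
  · rw [max_eq_left ((min_le_right hi c).trans hc)]
    exact mul_nonneg (sub_nonneg.2 hc) (sub_nonneg.2 hy.1)
  rcases le_total hi c with hc | hhi
  · rw [min_eq_left hc, max_eq_right (hy.1.trans hy.2)]
    exact mul_nonneg_of_nonpos_of_nonpos (sub_nonpos.2 hc) (sub_nonpos.2 hy.2)
  · simp [min_eq_right hhi, max_eq_right hlo]

namespace BoxQP

variable {ι : Type*} [Fintype ι] (a d : ι → ℝ) (σ : ℝ)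

noncomputable def objective (x : ι → ℝ) : ℝ :=
  ∑ i, a i * x i + σ / 2 * ∑ i, d i * x i ^ 2 + σ / 2 * (∑ i, x i) ^ 2

def gradient (x : ι → ℝ) (i : ι) : ℝ :=
  a i + σ * d i * x i + σ * ∑ j, x j

theorem objective_eq_taylor (x y : ι → ℝ) :
    objective a d σ y = objective a d σ x + ∑ i, gradient a d σ x i * (y i - x i)
      + σ / 2 * ∑ i, d i * (y i - x i) ^ 2 + σ / 2 * (∑ i, (y i - x i)) ^ 2 := by
  have hy : ∑ i, y i = ∑ i, x i + ∑ i, (y i - x i) := by rw [sum_sub_distrib]; ring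
  have hterm : ∑ i, (a i * y i + σ / 2 * (d i * y i ^ 2)) = ∑ i, (a i * x i
      + σ / 2 * (d i * x i ^ 2) + (a i + σ * d i * x i) * (y i - x i)
      + σ / 2 * (d i * (y i - x i) ^ 2)) := sum_congr rfl fun i _ => by ring
  simp only [objective, gradient, add_mul, sum_add_distrib, ← mul_sum] at hterm ⊢
  rw [hy]
  linear_combination hterm

theorem objective_le_of_gradient_inner_nonneg (hσ : 0 ≤ σ) (hd : ∀ i, 0 ≤ d i) {x y : ι → ℝ}
    (hxy : 0 ≤ ∑ i, gradient a d σ x i * (y i - x i)) :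
    objective a d σ x ≤ objective a d σ y := by
  have hquad : 0 ≤ ∑ i, d i * (y i - x i) ^ 2 :=
    sum_nonneg fun i _ => mul_nonneg (hd i) (sq_nonneg _)
  have hσ2 : 0 ≤ σ / 2 := by positivity
  rw [objective_eq_taylor a d σ x y]
  linarith [mul_nonneg hσ2 hquad, mul_nonneg hσ2 (sq_nonneg (∑ i, (y i - x i)))]

end BoxQP

theorem root_gives_global_minimizer_general
    (n : ℕ) (a d : Fin n → ℝ) (hd : ∀ i, 0 < d i)
    (σ b τ : ℝ) (hσ : 0 < σ)
    (xs : Fin n → ℝ)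
    (hxs : ∀ i, xs i = max 0 (min b (-(a i + σ * τ) / (σ * d i))))
    (hτ : τ = ∑ i, xs i) :
    ∀ y : Fin n → ℝ, (∀ i, 0 ≤ y i ∧ y i ≤ b) →
      (∑ i, a i * xs i + σ / 2 * ∑ i, d i * (xs i) ^ 2 + σ / 2 * (∑ i, xs i) ^ 2) ≤
      (∑ i, a i * y i + σ / 2 * ∑ i, d i * (y i) ^ 2 + σ / 2 * (∑ i, y i) ^ 2) := by
  intro y hy
  refine BoxQP.objective_le_of_gradient_inner_nonneg a d σ hσ.le (fun i => (hd i).le) ?_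
  refine sum_nonneg fun i _ => ?_
  set c := -(a i + σ * τ) / (σ * d i)
  have hσd : 0 < σ * d i := mul_pos hσ (hd i)
  have hdi : d i ≠ 0 := (hd i).ne'
  have hgrad : BoxQP.gradient a d σ xs i = σ * d i * (xs i - c) := by
    simp only [BoxQP.gradient, c, ← hτ]
    field_simp
    ring
  rw [hgrad, mul_assoc, hxs i]
  exact mul_nonneg hσd.le (clamp_sub_mul_sub_nonneg c (hy i))

/-- If `x*_i = max 0 (min b (-(a_i + στ)/(σ d_i)))` and `τ = Σ_i x*_i`, then `x*` is a
global minimizer of `f(x) = Σ a_i x_i + (σ/2) Σ d_i x_i² + (σ/2)(Σ x_i)²` over the box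
`B = {x | 0 ≤ x i ≤ b}`. -/
theorem root_gives_global_minimizer
    (n : ℕ) (hn : 1 ≤ n) (a d : Fin n → ℝ) (hd : ∀ i, 0 < d i)
    (σ b τ : ℝ) (hσ : 0 < σ) (hb : 0 < b)
    (xs : Fin n → ℝ)
    (hxs : ∀ i, xs i = max 0 (min b (-(a i + σ * τ) / (σ * d i))))
    (hτ : τ = ∑ i, xs i) :
    ∀ y : Fin n → ℝ, (∀ i, 0 ≤ y i ∧ y i ≤ b) →
      (∑ i, a i * xs i + σ / 2 * ∑ i, d i * (xs i) ^ 2 + σ / 2 * (∑ i, xs i) ^ 2) ≤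
      (∑ i, a i * y i + σ / 2 * ∑ i, d i * (y i) ^ 2 + σ / 2 * (∑ i, y i) ^ 2) :=
  root_gives_global_minimizer_general n a d hd σ b τ hσ xs hxs hτ
end
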